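/- Define the group operation on SPD(n) transferred from Cholesky space: S₁ ⊙ S₂ = 𝓛⁻¹(⌊L₁⌋ + ⌊L₂⌋ + 𝔻(L₁)𝔻(L₂)) where Lᵢ = 𝓛(Sᵢ) are the Cholesky factors and 𝓛⁻¹(L) = LLᵀ. Then (SPD(n), ⊙) is an abelian group with identity the identity matrix. -/

import Mathlib

/-!
The Cholesky map `𝓛` is a bijection from SPD(n) onto Cholesky space, the lower triangular
matrices with positive diagonal: a factor `S = L Lᵀ` comes from the LDL decomposition, rescaling
the columns by `√D` and by signs, and it is unique because `L Lᵀ` determines `L` column by column.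
On Cholesky space `cholOp` is an abelian group law (off-diagonal entries add, positive diagonal
entries multiply), and transporting it along `𝓛` gives the group on SPD(n), with unit
`𝓛⁻¹ 1 = 1`.
-/

/-- A matrix is lower triangular if all entries strictly above the diagonal vanish. -/
def LowerTri {n : ℕ} (L : Matrix (Fin n) (Fin n) ℝ) : Prop :=
  ∀ i j, i < j → L i j = 0

/-- The Cholesky-space group operation on lower triangular matrices:
`⌊L₁⌋ + ⌊L₂⌋ + 𝔻(L₁)𝔻(L₂)` (off-diagonal entries add, diagonal entries multiply). -/
def cholOp {n : ℕ} (L₁ L₂ : Matrix (Fin n) (Fin n) ℝ) : Matrix (Fin n) (Fin n) ℝ :=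
  Matrix.of fun i j => if i = j then L₁ i i * L₂ j j else L₁ i j + L₂ i j

namespace Matrix

variable {m : Type*} [Fintype m] [LinearOrder m]

theorem IsLowerTriangular.posDef_mul_transpose [DecidableEq m] {L : Matrix m m ℝ}
    (hL : L.IsLowerTriangular) (hd : ∀ i, 0 < L i i) : (L * Lᵀ).PosDef := by
  have hdet : IsUnit L.det := by
    rw [det_of_isLowerTriangular L hL]
    exact (Finset.prod_pos fun i _ => hd i).ne'.isUnit
  simpa using PosDef.mul_conjTranspose_self L
    (vecMul_injective_iff_isUnit.mpr ((isUnit_iff_isUnit_det L).mpr hdet))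

/-- Multiplying column `i` by the sign of `L i i` does not change `L Lᵀ`. -/
theorem IsLowerTriangular.exists_diag_pos {L : Matrix m m ℝ} (hL : L.IsLowerTriangular)
    (hd : ∀ i, L i i ≠ 0) :
    ∃ L' : Matrix m m ℝ, L'.IsLowerTriangular ∧ (∀ i, 0 < L' i i) ∧ L' * L'ᵀ = L * Lᵀ := by
  classical
  set s : m → ℝ := fun i => SignType.sign (L i i)
  have hss : diagonal s * diagonal s = 1 := by
    rw [diagonal_mul_diagonal, ← diagonal_one]
    congr 1
    funext i
    exact mul_left_cancel₀ (hd i) (by rw [← mul_assoc, self_mul_sign, abs_mul_sign, mul_one])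
  refine ⟨L * diagonal s, fun i j hij => ?_, fun i => ?_, ?_⟩
  · rw [mul_diagonal, hL hij, zero_mul]
  · rw [mul_diagonal, self_mul_sign]
    exact abs_pos.mpr (hd i)
  · rw [transpose_mul, diagonal_transpose, Matrix.mul_assoc, ← Matrix.mul_assoc (diagonal s), hss,
      Matrix.one_mul]

variable [LocallyFiniteOrderBot m]

theorem IsLowerTriangular.mul_transpose_apply {R : Type*} [NonUnitalNonAssocSemiring R]
    {L : Matrix m m R} (hL : L.IsLowerTriangular) (i j : m) :
    (L * Lᵀ) i j = ∑ k ∈ Finset.Iio j, L i k * L j k + L i j * L j j := by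
  rw [Finset.sum_Iio_add_eq_sum_Iic, mul_apply]
  refine (Finset.sum_subset (Finset.subset_univ _) fun k _ hk => ?_).symm
  rw [transpose_apply, hL (show j < k from not_le.mp (Finset.mem_Iic.not.mp hk)), mul_zero]

/-- Induction on columns: by `mul_transpose_apply`, once the columns before `j` agree, the
entries `(i, j)` of `L Lᵀ` determine the products `L i j * L j j`. -/
theorem IsLowerTriangular.eq_of_mul_transpose_eq {R : Type*} [Field R] [LinearOrder R]
    [IsStrictOrderedRing R] {L₁ L₂ : Matrix m m R}
    (h₁ : L₁.IsLowerTriangular) (h₂ : L₂.IsLowerTriangular)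
    (hd₁ : ∀ i, 0 < L₁ i i) (hd₂ : ∀ i, 0 < L₂ i i) (h : L₁ * L₁ᵀ = L₂ * L₂ᵀ) : L₁ = L₂ := by
  suffices hcol : ∀ j i, L₁ i j = L₂ i j from ext fun i j => hcol j i
  intro j
  induction j using WellFoundedLT.induction with
  | _ j ih =>
    have hprod : ∀ i, L₁ i j * L₁ j j = L₂ i j * L₂ j j := fun i => by
      have hij := congrFun (congrFun h i) j
      rw [h₁.mul_transpose_apply, h₂.mul_transpose_apply,
        Finset.sum_congr rfl fun k hk => by rw [ih k (Finset.mem_Iio.mp hk) i,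
          ih k (Finset.mem_Iio.mp hk) j]] at hij
      exact add_left_cancel hij
    have hjj : L₁ j j = L₂ j j := (mul_self_inj (hd₁ j).le (hd₂ j).le).mp (hprod j)
    intro i
    rw [hjj] at hprod
    exact mul_right_cancel₀ (hd₂ j).ne' (hprod i)

/-- The LDL decomposition `S = L D Lᵀ` gives `S = (L √D) (L √D)ᵀ`. -/
theorem PosDef.exists_isLowerTriangular_mul_transpose_eq {S : Matrix m m ℝ} (hS : S.PosDef) :
    ∃ L : Matrix m m ℝ, L.IsLowerTriangular ∧ L * Lᵀ = S := by
  classical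
  have hlower : (LDL.lower hS).IsLowerTriangular :=
    blockTriangular_inv_of_blockTriangular fun i j hij => LDL.lowerInv_triangular hS hij
  have hdiag : (LDL.diag hS).PosDef := by
    rw [LDL.diag_eq_lowerInv_conj]
    exact hS.mul_mul_conjTranspose_same
      (vecMul_injective_iff_isUnit.mpr (isUnit_of_invertible _))
  have hd : ∀ i, 0 < LDL.diagEntries hS i := posDef_diagonal_iff.mp hdiag
  refine ⟨LDL.lower hS * diagonal fun i => √(LDL.diagEntries hS i),
    fun i j hij => by rw [mul_diagonal, hlower hij, zero_mul], ?_⟩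
  have hsqrt : (diagonal fun i => √(LDL.diagEntries hS i)) *
      diagonal (fun i => √(LDL.diagEntries hS i)) = LDL.diag hS := by
    rw [diagonal_mul_diagonal, LDL.diag]
    exact congrArg diagonal (funext fun i => Real.mul_self_sqrt (hd i).le)
  rw [transpose_mul, diagonal_transpose, Matrix.mul_assoc, ← Matrix.mul_assoc (diagonal _), hsqrt,
    ← Matrix.mul_assoc, ← conjTranspose_eq_transpose_of_trivial, LDL.lower_conj_diag]

theorem PosDef.exists_cholesky {S : Matrix m m ℝ} (hS : S.PosDef) :
    ∃ L : Matrix m m ℝ, L.IsLowerTriangular ∧ (∀ i, 0 < L i i) ∧ L * Lᵀ = S := by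
  classical
  obtain ⟨L, hL, rfl⟩ := hS.exists_isLowerTriangular_mul_transpose_eq
  have hdet : L.det ≠ 0 := fun h => by simpa [h] using hS.det_pos
  rw [det_of_isLowerTriangular L hL, Finset.prod_ne_zero_iff] at hdet
  exact hL.exists_diag_pos fun i => hdet i (Finset.mem_univ i)

open Classical in
/-- Junk value `0` when `S` is not positive definite. -/
noncomputable def cholesky (S : Matrix m m ℝ) : Matrix m m ℝ :=
  if hS : S.PosDef then hS.exists_cholesky.choose else 0

theorem PosDef.cholesky_spec {S : Matrix m m ℝ} (hS : S.PosDef) :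
    (cholesky S).IsLowerTriangular ∧ (∀ i, 0 < cholesky S i i) ∧
      cholesky S * (cholesky S)ᵀ = S := by
  rw [cholesky, dif_pos hS]
  exact hS.exists_cholesky.choose_spec

theorem IsLowerTriangular.cholesky_mul_transpose {L : Matrix m m ℝ} (hL : L.IsLowerTriangular)
    (hd : ∀ i, 0 < L i i) : cholesky (L * Lᵀ) = L := by
  classical
  obtain ⟨hlower, hpos, hmul⟩ := (hL.posDef_mul_transpose hd).cholesky_spec
  exact hlower.eq_of_mul_transpose_eq hL hpos hd hmul

end Matrix

section CholeskySpace

open Matrix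

variable {n : ℕ}

def CholeskySpace (n : ℕ) : Type :=
  {L : Matrix (Fin n) (Fin n) ℝ // L.IsLowerTriangular ∧ ∀ i, 0 < L i i}

noncomputable def cholInv (L : Matrix (Fin n) (Fin n) ℝ) : Matrix (Fin n) (Fin n) ℝ :=
  of fun i j => if i = j then (L i i)⁻¹ else -L i j

theorem isLowerTriangular_cholOp {L₁ L₂ : Matrix (Fin n) (Fin n) ℝ} (h₁ : L₁.IsLowerTriangular)
    (h₂ : L₂.IsLowerTriangular) : (cholOp L₁ L₂).IsLowerTriangular := fun i j (hij : i < j) => by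
  simp [cholOp, hij.ne, h₁ hij, h₂ hij]

theorem cholOp_diag_pos {L₁ L₂ : Matrix (Fin n) (Fin n) ℝ} (h₁ : ∀ i, 0 < L₁ i i)
    (h₂ : ∀ i, 0 < L₂ i i) (i : Fin n) : 0 < cholOp L₁ L₂ i i := by
  simpa [cholOp] using mul_pos (h₁ i) (h₂ i)

theorem isLowerTriangular_cholInv {L : Matrix (Fin n) (Fin n) ℝ} (hL : L.IsLowerTriangular) :
    (cholInv L).IsLowerTriangular := fun i j (hij : i < j) => by
  simp [cholInv, hij.ne, hL hij]

theorem cholInv_diag_pos {L : Matrix (Fin n) (Fin n) ℝ} (hL : ∀ i, 0 < L i i) (i : Fin n) :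
    0 < cholInv L i i := by
  simpa [cholInv] using hL i

theorem cholOp_assoc (L₁ L₂ L₃ : Matrix (Fin n) (Fin n) ℝ) :
    cholOp (cholOp L₁ L₂) L₃ = cholOp L₁ (cholOp L₂ L₃) := by
  ext i j
  by_cases h : i = j
  · subst h; simp [cholOp, mul_assoc]
  · simp [cholOp, h, add_assoc]

theorem cholOp_comm (L₁ L₂ : Matrix (Fin n) (Fin n) ℝ) : cholOp L₁ L₂ = cholOp L₂ L₁ := by
  ext i j
  by_cases h : i = j
  · subst h; simp [cholOp, mul_comm]
  · simp [cholOp, h, add_comm]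

theorem one_cholOp (L : Matrix (Fin n) (Fin n) ℝ) : cholOp 1 L = L := by
  ext i j
  by_cases h : i = j
  · subst h; simp [cholOp]
  · simp [cholOp, h]

theorem cholInv_cholOp {L : Matrix (Fin n) (Fin n) ℝ} (hL : ∀ i, L i i ≠ 0) :
    cholOp (cholInv L) L = 1 := by
  ext i j
  by_cases h : i = j
  · subst h; simp [cholOp, cholInv, hL]
  · simp [cholOp, cholInv, h]

noncomputable instance : CommGroup (CholeskySpace n) where
  mul L₁ L₂ :=
    ⟨cholOp L₁.1 L₂.1, isLowerTriangular_cholOp L₁.2.1 L₂.2.1, cholOp_diag_pos L₁.2.2 L₂.2.2⟩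
  one := ⟨1, fun _ _ hij => one_apply_ne hij.ne', fun _ => by simp⟩
  inv L := ⟨cholInv L.1, isLowerTriangular_cholInv L.2.1, cholInv_diag_pos L.2.2⟩
  mul_assoc L₁ L₂ L₃ := Subtype.ext (cholOp_assoc L₁.1 L₂.1 L₃.1)
  one_mul L := Subtype.ext (one_cholOp L.1)
  mul_one L := Subtype.ext ((cholOp_comm _ _).trans (one_cholOp L.1))
  inv_mul_cancel L := Subtype.ext (cholInv_cholOp fun i => (L.2.2 i).ne')
  mul_comm L₁ L₂ := Subtype.ext (cholOp_comm L₁.1 L₂.1)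

noncomputable def choleskyEquiv (n : ℕ) :
    {S : Matrix (Fin n) (Fin n) ℝ // S.PosDef} ≃ CholeskySpace n where
  toFun S := ⟨cholesky S.1, S.2.cholesky_spec.1, S.2.cholesky_spec.2.1⟩
  invFun L := ⟨L.1 * L.1ᵀ, L.2.1.posDef_mul_transpose L.2.2⟩
  left_inv S := Subtype.ext S.2.cholesky_spec.2.2
  right_inv L := Subtype.ext (L.2.1.cholesky_mul_transpose L.2.2)

theorem lowerTri_iff_isLowerTriangular {L : Matrix (Fin n) (Fin n) ℝ} :
    LowerTri L ↔ L.IsLowerTriangular :=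
  ⟨fun h _ _ hij => h _ _ hij, fun h _ _ hij => h hij⟩

end CholeskySpace

open Matrix in
/-- The operation `S₁ ⊙ S₂ = 𝓛⁻¹(⌊L₁⌋ + ⌊L₂⌋ + 𝔻(L₁)𝔻(L₂))` transferred from Cholesky
space (`Lᵢ = 𝓛(Sᵢ)` the Cholesky factors, `𝓛⁻¹(L) = LLᵀ`) makes SPD(n) an abelian group
with identity the identity matrix. -/
theorem log_cholesky_group (n : ℕ) :
    ∃ chol : Matrix (Fin n) (Fin n) ℝ → Matrix (Fin n) (Fin n) ℝ,
      (∀ S : Matrix (Fin n) (Fin n) ℝ, S.PosDef →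
        LowerTri (chol S) ∧ (∀ i, 0 < chol S i i) ∧ S = chol S * (chol S)ᵀ) ∧
      ∃ G : CommGroup {S : Matrix (Fin n) (Fin n) ℝ // S.PosDef},
        (∀ S₁ S₂ : {S : Matrix (Fin n) (Fin n) ℝ // S.PosDef},
          ((G.mul S₁ S₂ : {S : Matrix (Fin n) (Fin n) ℝ // S.PosDef}) :
              Matrix (Fin n) (Fin n) ℝ) =
            cholOp (chol (S₁ : Matrix (Fin n) (Fin n) ℝ))
                (chol (S₂ : Matrix (Fin n) (Fin n) ℝ)) *
              (cholOp (chol (S₁ : Matrix (Fin n) (Fin n) ℝ))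
                (chol (S₂ : Matrix (Fin n) (Fin n) ℝ)))ᵀ) ∧
        ((G.one : Matrix (Fin n) (Fin n) ℝ) = 1) := by
  refine ⟨cholesky, fun S hS => ?_, (choleskyEquiv n).commGroup, fun S₁ S₂ => rfl, ?_⟩
  · obtain ⟨hlower, hpos, hmul⟩ := hS.cholesky_spec
    exact ⟨lowerTri_iff_isLowerTriangular.mpr hlower, hpos, hmul.symm⟩
  · show (1 : Matrix (Fin n) (Fin n) ℝ) * 1ᵀ = 1
    simp
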